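/- arXiv:2106.03370 — 3 statements merged into one kernel-verified Lean document; each statement's English description precedes it below -/
import Mathlib

section
/- For any a₁, a₂, a₃ ∈ 𝔽₃, any nonzero 𝔽₃-linear map φ : 𝔽₃³ → 𝔽₃, and any t ∈ 𝔽₃, there exists h = (h₁, h₂, h₃) ∈ 𝔽₃³ such that h₁ ≠ a₁, h₂ ≠ a₂, h₃ ≠ a₃, and φ(h) ≠ t. -/
set_option maxHeartbeats 1000000 in
set_option synthInstance.maxSize 400 in
set_option synthInstance.maxHeartbeats 400000 in
lemma aux_avoid (c₀ c₁ c₂ a₁ a₂ a₃ t : ZMod 3)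
    (hc : ¬(c₀ = 0 ∧ c₁ = 0 ∧ c₂ = 0)) :
    ∃ h₀ h₁ h₂ : ZMod 3, h₀ ≠ a₁ ∧ h₁ ≠ a₂ ∧ h₂ ≠ a₃ ∧
      h₀ * c₀ + h₁ * c₁ + h₂ * c₂ ≠ t := by
  revert hc; revert c₀ c₁ c₂ a₁ a₂ a₃ t; decide

/-- For any `a₁, a₂, a₃ ∈ 𝔽₃`, any nonzero linear functional `φ` on `𝔽₃³`, and any
`t ∈ 𝔽₃`, there is `h ∈ 𝔽₃³` with `hᵢ ≠ aᵢ` for each coordinate and `φ h ≠ t`. -/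
theorem exists_avoiding_vector (a₁ a₂ a₃ : ZMod 3)
    (φ : (Fin 3 → ZMod 3) →ₗ[ZMod 3] ZMod 3) (hφ : φ ≠ 0) (t : ZMod 3) :
    ∃ h : Fin 3 → ZMod 3, h 0 ≠ a₁ ∧ h 1 ≠ a₂ ∧ h 2 ≠ a₃ ∧ φ h ≠ t := by
  set c : Fin 3 → ZMod 3 := fun i => φ (Pi.single i 1) with hcdef
  have hrep : ∀ f : Fin 3 → ZMod 3, φ f = f 0 * c 0 + f 1 * c 1 + f 2 * c 2 := by
    intro f
    rw [LinearMap.pi_apply_eq_sum_univ φ f]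
    simp only [Fin.sum_univ_three, smul_eq_mul, hcdef]
    have hs : ∀ i : Fin 3, (fun j => if i = j then (1:ZMod 3) else 0) = Pi.single i 1 := by
      intro i; funext j; simp [Pi.single_apply, eq_comm]
    rw [hs, hs, hs]
  have hc : ¬(c 0 = 0 ∧ c 1 = 0 ∧ c 2 = 0) := by
    rintro ⟨h0, h1, h2⟩
    apply hφ
    apply LinearMap.ext
    intro f
    rw [hrep f, h0, h1, h2]
    simp
  obtain ⟨h₀, h₁, h₂, H1, H2, H3, H4⟩ := aux_avoid (c 0) (c 1) (c 2) a₁ a₂ a₃ t hc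
  refine ⟨![h₀, h₁, h₂], H1, H2, H3, ?_⟩
  rw [hrep]
  simpa using H4
end

section
/- Let p be a prime and let m, t ≥ 1 be integers. For each 1 ≤ i ≤ t, let G_i be a finite cyclic group of order n_i with fixed generator g_i, and assume p^m divides n_i. Set G := G₁ × ⋯ × G_t. Let A be a commutative ring with p^m·1_A = 0, so that A is canonically a ℤ/p^m-algebra. For each i, define log_{g_i} : G → ℤ/p^m by log_{g_i}(σ) := k mod p^m whenever the i-th component of σ equals g_i^k (this is well defined because p^m divides n_i). In the group algebra A[G], set D_i := Σ_{k=0}^{n_i−1} k·g_i^k (viewing g_i as the corresponding element of G), D := D₁·D₂⋯D_t, and N := Σ_{σ∈G} σ. Let c = Σ_{σ∈G} a_σ·σ ∈ A[G] with coefficients a_σ ∈ A, and assume that (g_i − 1)·D·c = 0 in A[G] for every 1 ≤ i ≤ t. Then D·c = (−1)^t · ( Σ_{σ∈G} a_σ · Π_{i=1}^{t} log_{g_i}(σ) ) · N, where the product Π_{i} log_{g_i}(σ) ∈ ℤ/p^m acts on A via the ℤ/p^m-algebra structure. -/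
/-!
Each `g_i` fixes `x := D·c`, and the `g_i` generate `G`, so every `σ ∈ G` fixes `x`: the
coefficients of `x` are all equal to its coefficient at `1`, i.e. `x = x₁ • N`. Reindexing each
`D_i` over `G_i` gives `D = Σ_τ (Π_i log_{g_i} τ_i) τ`, so
`x₁ = Σ_σ (Π_i log_{g_i} σ_i⁻¹) a_σ`, and `log_{g_i} σ_i⁻¹ = -log_{g_i} σ_i` because `p^m`
divides the order of `g_i`.
-/

open Finset MonoidAlgebra

section CyclicGroup

variable {G : Type*} [Group G] {g : G}

theorem sum_range_orderOf_pow_eq_sum [Fintype G] {M : Type*} [AddCommMonoid M]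
    (hg : ∀ x, x ∈ Subgroup.zpowers g) (f : G → M) :
    ∑ k ∈ range (orderOf g), f (g ^ k) = ∑ x, f x := by
  classical
  rw [← IsCyclic.image_range_orderOf hg, sum_image]
  exact fun i hi j hj hij => pow_injOn_Iio_orderOf (by simpa using hi) (by simpa using hj) hij

theorem apply_inv_eq_neg_of_apply_pow_eq_natCast [Finite G] {N : ℕ} (hN : N ∣ orderOf g)
    (log : G → ZMod N) (hlog : ∀ k : ℕ, log (g ^ k) = k) {x : G}
    (hx : x ∈ Subgroup.zpowers g) : log x⁻¹ = -log x := by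
  obtain ⟨j, rfl : g ^ j = x⟩ := mem_powers_iff_mem_zpowers.mpr hx
  obtain ⟨k, hk : g ^ k = (g ^ j)⁻¹⟩ := mem_powers_iff_mem_zpowers.mpr (inv_mem hx)
  have hkj : orderOf g ∣ k + j := orderOf_dvd_of_pow_eq_one (by rw [pow_add, hk, inv_mul_cancel])
  rw [← hk, hlog, hlog, eq_neg_iff_add_eq_zero, ← Nat.cast_add, ZMod.natCast_eq_zero_iff]
  exact hN.trans hkj

end CyclicGroup

namespace MonoidAlgebra

variable {k : Type*}

section Semiring

variable [Semiring k] {G : Type*} [Fintype G]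

theorem coeff_sum_smul_of [MulOneClass G] (u : G → k) (τ : G) :
    (∑ σ, u σ • of k G σ).coeff τ = u τ := by
  classical
  simp [coeff_sum, Finsupp.single_apply]

theorem coeff_sum_of [MulOneClass G] (τ : G) :
    (∑ σ, of k G σ).coeff τ = 1 := by
  classical
  simp [coeff_sum, Finsupp.single_apply]

variable [Group G]

theorem coeff_sum_smul_of_mul (u : G → k) (y : k[G]) (τ : G) :
    ((∑ σ, u σ • of k G σ) * y).coeff τ = ∑ σ, u σ * y.coeff (σ⁻¹ * τ) := by
  simp [sum_mul, coeff_sum]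

theorem eq_coeff_one_smul_sum_of_of_mul_eq {x : k[G]} (hx : ∀ σ, of k G σ * x = x) :
    x = x.coeff 1 • ∑ σ, of k G σ := by
  ext τ
  rw [coeff_smul_apply, coeff_sum_of, smul_eq_mul, mul_one]
  calc x.coeff τ = (of k G τ * x).coeff τ := by rw [hx]
    _ = x.coeff 1 := by rw [of_apply, coeff_single_mul_apply, inv_mul_cancel, one_mul]

end Semiring

variable {ι : Type*} [Fintype ι] [DecidableEq ι] {G : ι → Type*}

theorem prod_sum_smul_of_mulSingle [CommSemiring k] [∀ i, CommMonoid (G i)]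
    [∀ i, Fintype (G i)] (f : ∀ i, G i → k) :
    ∏ i, ∑ x : G i, f i x • of k (∀ i, G i) (Pi.mulSingle i x) =
      ∑ σ : ∀ i, G i, (∏ i, f i (σ i)) • of k (∀ i, G i) σ := by
  rw [prod_univ_sum]
  simp [Fintype.piFinset_univ, of_apply, smul_single, prod_single, univ_prod_mulSingle]

theorem of_mul_eq_of_forall_of_mulSingle_mul_eq [Semiring k] [∀ i, CommGroup (G i)]
    [∀ i, Finite (G i)] {g : ∀ i, G i} (hg : ∀ i x, x ∈ Subgroup.zpowers (g i))
    {x : k[∀ i, G i]} (hx : ∀ i, of k (∀ i, G i) (Pi.mulSingle i (g i)) * x = x)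
    (σ : ∀ i, G i) : of k (∀ i, G i) σ * x = x := by
  let S := (MulAction.stabilizerSubmonoid k[∀ i, G i] x).comap (of k (∀ i, G i))
  have hS : ∀ i (y : G i), Pi.mulSingle i y ∈ S := by
    intro i y
    obtain ⟨n, rfl : g i ^ n = y⟩ := mem_powers_iff_mem_zpowers.mpr (hg i y)
    rw [Pi.mulSingle_pow]
    exact pow_mem (hx i) n
  rw [← univ_prod_mulSingle σ]
  exact prod_mem fun i _ => hS i (σ i)

end MonoidAlgebra

theorem kolyvagin_derivative_leading_coefficient_general
    (p : ℕ) (m t : ℕ)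
    (Gr : Fin t → Type*) [∀ i, CommGroup (Gr i)] [∀ i, Fintype (Gr i)]
    (n : Fin t → ℕ) (g : ∀ i, Gr i)
    (hgen : ∀ i, ∀ x : Gr i, x ∈ Subgroup.zpowers (g i))
    (hcard : ∀ i, Fintype.card (Gr i) = n i)
    (hdvd : ∀ i, p ^ m ∣ n i)
    (A : Type*) [CommRing A] [Algebra (ZMod (p ^ m)) A]
    (logg : ∀ i : Fin t, Gr i → ZMod (p ^ m))
    (hlog : ∀ i (k : ℕ), logg i (g i ^ k) = (k : ZMod (p ^ m)))
    (a : (∀ i, Gr i) → A)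
    (hinv : ∀ i : Fin t,
      (MonoidAlgebra.of A (∀ i, Gr i) (Pi.mulSingle i (g i)) - 1) *
        ((∏ i, ∑ k ∈ Finset.range (n i),
            (k : A) • MonoidAlgebra.of A (∀ i, Gr i) (Pi.mulSingle i (g i ^ k))) *
          (∑ σ : ∀ i, Gr i, a σ • MonoidAlgebra.of A (∀ i, Gr i) σ)) = 0) :
    (∏ i, ∑ k ∈ Finset.range (n i),
        (k : A) • MonoidAlgebra.of A (∀ i, Gr i) (Pi.mulSingle i (g i ^ k))) *
      (∑ σ : ∀ i, Gr i, a σ • MonoidAlgebra.of A (∀ i, Gr i) σ) =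
    ((-1 : A) ^ t *
        ∑ σ : ∀ i, Gr i, a σ * algebraMap (ZMod (p ^ m)) A (∏ i, logg i (σ i))) •
      (∑ σ : ∀ i, Gr i, MonoidAlgebra.of A (∀ i, Gr i) σ) := by
  have horder : ∀ i, orderOf (g i) = n i := fun i =>
    (orderOf_eq_card_of_forall_mem_zpowers (hgen i)).trans
      (Nat.card_eq_fintype_card.trans (hcard i))
  have hD : (∏ i, ∑ k ∈ range (n i),
        (k : A) • of A (∀ i, Gr i) (Pi.mulSingle i (g i ^ k))) =
      ∑ σ : ∀ i, Gr i, (∏ i, algebraMap (ZMod (p ^ m)) A (logg i (σ i))) • of A _ σ := by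
    rw [← prod_sum_smul_of_mulSingle fun i x => algebraMap (ZMod (p ^ m)) A (logg i x)]
    refine prod_congr rfl fun i _ => ?_
    rw [← horder i, ← sum_range_orderOf_pow_eq_sum (hgen i)]
    exact sum_congr rfl fun k _ => by rw [hlog, map_natCast]
  have hlog_inv : ∀ σ : ∀ i, Gr i,
      ∏ i, logg i (σ⁻¹ i) = (-1) ^ t * ∏ i, logg i (σ i) := fun σ =>
    calc ∏ i, logg i (σ⁻¹ i) = ∏ i, -logg i (σ i) :=
          prod_congr rfl fun i _ => apply_inv_eq_neg_of_apply_pow_eq_natCast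
            ((hdvd i).trans (dvd_of_eq (horder i).symm)) (logg i) (hlog i) (hgen i (σ i))
      _ = (-1) ^ t * ∏ i, logg i (σ i) := by rw [prod_neg, card_univ, Fintype.card_fin]
  refine (eq_coeff_one_smul_sum_of_of_mul_eq
    (of_mul_eq_of_forall_of_mulSingle_mul_eq hgen fun i => ?_)).trans ?_
  · rw [← sub_eq_zero, ← sub_one_mul]
    exact hinv i
  congr 1
  simp_rw [hD, coeff_sum_smul_of_mul, mul_one, coeff_sum_smul_of]
  rw [← Equiv.sum_comp (Equiv.inv _), mul_sum]
  refine sum_congr rfl fun σ _ => ?_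
  rw [Equiv.inv_apply, inv_inv, ← map_prod, hlog_inv, map_mul, map_pow, map_neg, map_one]
  ring

/-- Lemma 4.4 of the paper: if `D·c` is invariant under each `g_i`, then `D·c` equals
`(-1)^t (Σ_σ a_σ Π_i log_{g_i}(σ)) · N` in the group algebra `A[G₁ × ⋯ × G_t]`. -/
theorem kolyvagin_derivative_leading_coefficient
    (p : ℕ) (hp : p.Prime) (m t : ℕ) (hm : 1 ≤ m) (ht : 1 ≤ t)
    (Gr : Fin t → Type*) [∀ i, CommGroup (Gr i)] [∀ i, Fintype (Gr i)]
    (n : Fin t → ℕ) (g : ∀ i, Gr i)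
    (hgen : ∀ i, ∀ x : Gr i, x ∈ Subgroup.zpowers (g i))
    (hcard : ∀ i, Fintype.card (Gr i) = n i)
    (hdvd : ∀ i, p ^ m ∣ n i)
    (A : Type*) [CommRing A] [Algebra (ZMod (p ^ m)) A]
    (logg : ∀ i : Fin t, Gr i → ZMod (p ^ m))
    (hlog : ∀ i (k : ℕ), logg i (g i ^ k) = (k : ZMod (p ^ m)))
    (a : (∀ i, Gr i) → A)
    (hinv : ∀ i : Fin t,
      (MonoidAlgebra.of A (∀ i, Gr i) (Pi.mulSingle i (g i)) - 1) *
        ((∏ i, ∑ k ∈ Finset.range (n i),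
            (k : A) • MonoidAlgebra.of A (∀ i, Gr i) (Pi.mulSingle i (g i ^ k))) *
          (∑ σ : ∀ i, Gr i, a σ • MonoidAlgebra.of A (∀ i, Gr i) σ)) = 0) :
    (∏ i, ∑ k ∈ Finset.range (n i),
        (k : A) • MonoidAlgebra.of A (∀ i, Gr i) (Pi.mulSingle i (g i ^ k))) *
      (∑ σ : ∀ i, Gr i, a σ • MonoidAlgebra.of A (∀ i, Gr i) σ) =
    ((-1 : A) ^ t *
        ∑ σ : ∀ i, Gr i, a σ * algebraMap (ZMod (p ^ m)) A (∏ i, logg i (σ i))) •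
      (∑ σ : ∀ i, Gr i, MonoidAlgebra.of A (∀ i, Gr i) σ) :=
  kolyvagin_derivative_leading_coefficient_general p m t Gr n g hgen hcard hdvd A logg hlog a hinv
end

section
/- Let k be a field, let G be a finite abelian group, and let M be a finitely generated module over the group algebra k[G]. Write M^* := Hom_{k[G]}(M, k[G]), let M^G := {x ∈ M : g·x = x for all g ∈ G} denote the G-invariants, and let (M^*)_G := M^* / (span of the elements g·f − f for g ∈ G, f ∈ M^*) denote the G-coinvariants of M^*. Then dim_k (M^*)_G = dim_k M^G. -/
/-!
Restricting along the coefficient of `1` identifies `Hom_{k[G]}(M, k[G])` with the `k`-dual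
`Hom_k(M, k)`, and turns the `G`-action `f ↦ g • f` into precomposition with `g`. The
coinvariant relations `φ ∘ g - φ` then span exactly the annihilator of `M^G` (in finite dimension
a subspace of the dual is the annihilator of its common kernel), so the coinvariants are the
dual of `M^G`.
-/

/-- The submodule of `G`-invariants of a module over the group algebra `k[G]`. -/
def groupInvariants (R : Type*) [CommSemiring R] (G : Type*) [CommMonoid G]
    (M : Type*) [AddCommMonoid M] [Module (MonoidAlgebra R G) M]
    [Module R M] [IsScalarTower R (MonoidAlgebra R G) M] :
    Submodule R M where
  carrier := {x | ∀ g : G, MonoidAlgebra.of R G g • x = x}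
  add_mem' hx hy := fun g => by rw [smul_add, hx g, hy g]
  zero_mem' := fun g => smul_zero _
  smul_mem' c x hx := fun g => by rw [smul_comm, hx g]

theorem Subspace.finrank_dual_quotient_eq_finrank_dualCoannihilator {K V : Type*} [Field K]
    [AddCommGroup V] [Module K V] [FiniteDimensional K V] (Φ : Subspace K (Module.Dual K V)) :
    Module.finrank K (Module.Dual K V ⧸ Φ) = Module.finrank K Φ.dualCoannihilator :=
  Φ.quotEquivAnnihilator.finrank_eq.trans Subspace.finrank_dualCoannihilator_eq.symm

theorem Representation.dualCoannihilator_span_comp_sub_self {K G V : Type*} [Field K] [Group G]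
    [AddCommGroup V] [Module K V] (ρ : Representation K G V) :
    (Submodule.span K {ψ : Module.Dual K V | ∃ (g : G) (φ : Module.Dual K V),
      ψ = φ ∘ₗ ρ g - φ}).dualCoannihilator = ρ.invariants := by
  ext x
  rw [← SetLike.mem_coe, Submodule.coe_dualCoannihilator_span]
  constructor
  · intro h g
    rw [← sub_eq_zero, ← Module.forall_dual_apply_eq_zero_iff K]
    intro φ
    simpa using h _ ⟨g, φ, rfl⟩
  · rintro hx _ ⟨g, φ, rfl⟩
    simp [hx g]

theorem Representation.ofModule'_apply {k G M : Type*} [CommSemiring k] [Monoid G]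
    [AddCommMonoid M] [Module (MonoidAlgebra k G) M] [Module k M]
    [IsScalarTower k (MonoidAlgebra k G) M] (g : G) (x : M) :
    Representation.ofModule' (k := k) M g x = MonoidAlgebra.of k G g • x := by
  simp [Representation.ofModule']

namespace MonoidAlgebra

section Group

variable {k G M : Type*} [CommSemiring k] [Group G] [AddCommMonoid M] [Module k[G] M]

theorem coeff_apply_eq_coeff_one_apply_inv_smul (f : M →ₗ[k[G]] k[G]) (x : M) (g : G) :
    (f x).coeff g = (f (of k G g⁻¹ • x)).coeff 1 := by
  simp [of_apply]

variable [Module k M] [IsScalarTower k k[G] M] [Fintype G]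

noncomputable def dualLift (φ : M →ₗ[k] k) : M →ₗ[k[G]] k[G] :=
  equivariantOfLinearOfComm
    ((coeffLinearEquiv k).symm.toLinearMap ∘ₗ
      (Finsupp.linearEquivFunOnFinite k k G).symm.toLinearMap ∘ₗ
      LinearMap.pi fun g => φ ∘ₗ Representation.ofModule' M g⁻¹)
    fun g x => by ext h; simp [Representation.ofModule'_apply, smul_smul]

theorem coeff_dualLift_apply (φ : M →ₗ[k] k) (x : M) (g : G) :
    (dualLift φ x).coeff g = φ (of k G g⁻¹ • x) := by
  simp [dualLift, Representation.ofModule'_apply]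

noncomputable def dualEquiv : (M →ₗ[k[G]] k[G]) ≃ₗ[k] (M →ₗ[k] k) where
  toFun f := (Finsupp.lapply 1 ∘ₗ (coeffLinearEquiv k).toLinearMap) ∘ₗ f.restrictScalars k
  invFun := dualLift
  map_add' _ _ := rfl
  map_smul' _ _ := rfl
  left_inv f := by
    ext x : 1
    ext g
    rw [coeff_dualLift_apply, coeff_apply_eq_coeff_one_apply_inv_smul f x g]
    rfl
  right_inv φ := by
    ext x
    simp [coeff_dualLift_apply, ← one_def]

theorem dualEquiv_apply (f : M →ₗ[k[G]] k[G]) (x : M) : dualEquiv f x = (f x).coeff 1 := rfl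

end Group

variable {k G M : Type*} [CommRing k] [CommGroup G] [Fintype G] [AddCommMonoid M]
  [Module k[G] M] [Module k M] [IsScalarTower k k[G] M]

theorem dualEquiv_smul_sub_self (g : G) (f : Module.Dual k[G] M) :
    dualEquiv (of k G g • f - f) =
      dualEquiv f ∘ₗ Representation.ofModule' M g - dualEquiv f := by
  ext x
  simp [dualEquiv_apply, Representation.ofModule'_apply]

theorem map_dualEquiv_span_smul_sub_self :
    (Submodule.span k {y : Module.Dual k[G] M | ∃ (g : G) (f : Module.Dual k[G] M),
      y = of k G g • f - f}).map (dualEquiv (k := k) (G := G) (M := M)).toLinearMap =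
    Submodule.span k {ψ : Module.Dual k M | ∃ (g : G) (φ : Module.Dual k M),
      ψ = φ ∘ₗ Representation.ofModule' M g - φ} := by
  rw [Submodule.map_span]
  congr 1
  ext ψ
  constructor
  · rintro ⟨_, ⟨g, f, rfl⟩, rfl⟩
    exact ⟨g, dualEquiv f, dualEquiv_smul_sub_self g f⟩
  · rintro ⟨g, φ, rfl⟩
    refine ⟨of k G g • dualEquiv.symm φ - dualEquiv.symm φ, ⟨g, _, rfl⟩, ?_⟩
    rw [LinearEquiv.coe_coe, dualEquiv_smul_sub_self, LinearEquiv.apply_symm_apply]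

end MonoidAlgebra

theorem groupInvariants_eq_invariants_ofModule' (k G M : Type*) [CommRing k] [CommGroup G]
    [AddCommGroup M] [Module (MonoidAlgebra k G) M] [Module k M]
    [IsScalarTower k (MonoidAlgebra k G) M] :
    groupInvariants k G M = (Representation.ofModule' M : Representation k G M).invariants := by
  ext x
  simp [groupInvariants, Representation.ofModule'_apply]

/-- For a finitely generated module `M` over `k[G]` (`G` finite abelian, `k` a field),
the `k`-dimension of the `G`-coinvariants of `M* = Hom_{k[G]}(M, k[G])` equals the
`k`-dimension of the `G`-invariants of `M`. -/
theorem finrank_dual_coinvariants_eq_finrank_invariants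
    (k : Type*) [Field k] (G : Type*) [CommGroup G] [Fintype G]
    (M : Type*) [AddCommGroup M] [Module (MonoidAlgebra k G) M]
    [Module k M] [IsScalarTower k (MonoidAlgebra k G) M]
    [Module.Finite (MonoidAlgebra k G) M] :
    Module.finrank k
        ((Module.Dual (MonoidAlgebra k G) M) ⧸
          Submodule.span k {y : Module.Dual (MonoidAlgebra k G) M |
            ∃ (g : G) (f : Module.Dual (MonoidAlgebra k G) M),
              y = MonoidAlgebra.of k G g • f - f}) =
      Module.finrank k (groupInvariants k G M) := by
  have : Module.Finite k M := .trans (MonoidAlgebra k G) M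
  rw [(Submodule.Quotient.equiv _ _ _ MonoidAlgebra.map_dualEquiv_span_smul_sub_self).finrank_eq,
    Subspace.finrank_dual_quotient_eq_finrank_dualCoannihilator,
    Representation.dualCoannihilator_span_comp_sub_self, groupInvariants_eq_invariants_ofModule']
end
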